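/- Exact momentum conservation of the time-discrete discrete-gradient scheme under vanishing total force: let H be a continuously differentiable function of the full particle state u = (X,V) ∈ (ℝᵈ)^N × (ℝᵈ)^N, let ∇̄H(u, u⁺) = ∫₀¹ ∇H((1−t)u + t u⁺) dt be the average discrete gradient on the full state, with position blocks (∇̄H)_{x_p} and velocity blocks (∇̄H)_{v_p}, and suppose the canonical discrete-gradient update holds: x_p^{n+1} = x_p^n + Δt (1/(m_p w_p)) (∇̄H)_{v_p} and v_p^{n+1} = v_p^n − Δt (1/(m_p w_p)) (∇̄H)_{x_p} for every p, where the discrete gradients are evaluated at (u^n, u^{n+1}). If Σ_{p=1}^N ∇_{x_p}H(X,V) = 0 for every state (X,V), then the total momentum is exactly conserved: Σ_{p=1}^N m_p w_p v_p^{n+1} = Σ_{p=1}^N m_p w_p v_p^n. -/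

import Mathlib

open scoped RealInnerProductSpace

/-- The phase-space state of `N` particles in dimension `d`: positions and velocities. -/
abbrev PState (d N : ℕ) :=
  (Fin N → EuclideanSpace ℝ (Fin d)) × (Fin N → EuclideanSpace ℝ (Fin d))

/-- Partial gradient of `H` with respect to the position `x_p` of particle `p`. -/
noncomputable def gradX {d N : ℕ} (H : PState d N → ℝ)
    (X V : Fin N → EuclideanSpace ℝ (Fin d)) (p : Fin N) : EuclideanSpace ℝ (Fin d) :=
  gradient (fun ξ => H (Function.update X p ξ, V)) (X p)

/-- Partial gradient of `H` with respect to the velocity `v_p` of particle `p`. -/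
noncomputable def gradV {d N : ℕ} (H : PState d N → ℝ)
    (X V : Fin N → EuclideanSpace ℝ (Fin d)) (p : Fin N) : EuclideanSpace ℝ (Fin d) :=
  gradient (fun ξ => H (X, Function.update V p ξ)) (V p)

/-- The position block `(∇̄H)_{x_p}` of the average discrete gradient of `H` on the
full state, `∇̄H(u,u⁺) = ∫₀¹ ∇H((1−t)u + t u⁺) dt`. -/
noncomputable def avgDGx {d N : ℕ} (H : PState d N → ℝ)
    (X V X' V' : Fin N → EuclideanSpace ℝ (Fin d)) (p : Fin N) :
    EuclideanSpace ℝ (Fin d) :=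
  ∫ t in (0:ℝ)..1, gradX H ((1 - t) • X + t • X') ((1 - t) • V + t • V') p

/-- The velocity block `(∇̄H)_{v_p}` of the average discrete gradient of `H` on the
full state. -/
noncomputable def avgDGv {d N : ℕ} (H : PState d N → ℝ)
    (X V X' V' : Fin N → EuclideanSpace ℝ (Fin d)) (p : Fin N) :
    EuclideanSpace ℝ (Fin d) :=
  ∫ t in (0:ℝ)..1, gradV H ((1 - t) • X + t • X') ((1 - t) • V + t • V') p


noncomputable def Jmap (d N : ℕ) (p : Fin N) : EuclideanSpace ℝ (Fin d) →L[ℝ] PState d N :=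
  (ContinuousLinearMap.pi (Pi.single p (ContinuousLinearMap.id ℝ (EuclideanSpace ℝ (Fin d))))).prod 0

lemma gradX_eq {d N : ℕ} (H : PState d N → ℝ) (hH : ContDiff ℝ 1 H)
    (X V : Fin N → EuclideanSpace ℝ (Fin d)) (p : Fin N) :
    gradX H X V p =
      (InnerProductSpace.toDual ℝ (EuclideanSpace ℝ (Fin d))).symm
        ((fderiv ℝ H (X, V)).comp (Jmap d N p)) := by
  have h1 : HasFDerivAt (fun ξ : EuclideanSpace ℝ (Fin d) => (Function.update X p ξ, V))
      (Jmap d N p) (X p) :=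
    HasFDerivAt.prodMk (hasFDerivAt_update X (X p)) (hasFDerivAt_const V (X p))
  have h2 : HasFDerivAt (fun ξ : EuclideanSpace ℝ (Fin d) => H (Function.update X p ξ, V))
      ((fderiv ℝ H (X, V)).comp (Jmap d N p)) (X p) := by
    have hd : HasFDerivAt H (fderiv ℝ H (X, V)) (Function.update X p (X p), V) := by
      rw [Function.update_eq_self]
      exact ((hH.differentiable one_ne_zero) (X, V)).hasFDerivAt
    exact hd.comp (X p) h1
  rw [gradX, gradient, h2.fderiv]

lemma continuous_gradX {d N : ℕ} (H : PState d N → ℝ) (hH : ContDiff ℝ 1 H) (p : Fin N) :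
    Continuous (fun u : PState d N => gradX H u.1 u.2 p) := by
  have : (fun u : PState d N => gradX H u.1 u.2 p) =
      fun u => (InnerProductSpace.toDual ℝ (EuclideanSpace ℝ (Fin d))).symm
        ((fderiv ℝ H u).comp (Jmap d N p)) := by
    funext u; exact gradX_eq H hH u.1 u.2 p
  rw [this]
  exact (InnerProductSpace.toDual ℝ _).symm.continuous.comp
    ((hH.continuous_fderiv one_ne_zero).clm_comp continuous_const)

lemma sum_avgDGx {d N : ℕ} (H : PState d N → ℝ) (hH : ContDiff ℝ 1 H)
    (hforce : ∀ (X V : Fin N → EuclideanSpace ℝ (Fin d)), ∑ p, gradX H X V p = 0)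
    (X V X' V' : Fin N → EuclideanSpace ℝ (Fin d)) :
    ∑ p, avgDGx H X V X' V' p = 0 := by
  unfold avgDGx
  rw [← intervalIntegral.integral_finset_sum]
  · simp [hforce]
  · intro p _
    apply Continuous.intervalIntegrable
    have hpath : Continuous (fun t : ℝ =>
        (((1 - t) • X + t • X', (1 - t) • V + t • V') : PState d N)) := by fun_prop
    exact (continuous_gradX H hH p).comp hpath

/-- Exact momentum conservation of the time-discrete discrete-gradient scheme
under vanishing total force: if the canonical discrete-gradient update holds and
`Σ_p ∇_{x_p}H(X,V) = 0` for every state, then `Σ_p m_p w_p v_p^{n+1} = Σ_p m_p w_p v_p^n`. -/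
theorem discrete_gradient_momentum_conservation (d N : ℕ) (hN : 1 ≤ N)
    (m w : Fin N → ℝ) (hm : ∀ p, 0 < m p) (hw : ∀ p, 0 < w p) (Δt : ℝ)
    (H : PState d N → ℝ) (hH : ContDiff ℝ 1 H)
    (hforce : ∀ (X V : Fin N → EuclideanSpace ℝ (Fin d)), ∑ p, gradX H X V p = 0)
    (Xn Vn Xn1 Vn1 : Fin N → EuclideanSpace ℝ (Fin d))
    (hx : ∀ p, Xn1 p = Xn p + (Δt * (1 / (m p * w p))) • avgDGv H Xn Vn Xn1 Vn1 p)
    (hv : ∀ p, Vn1 p = Vn p - (Δt * (1 / (m p * w p))) • avgDGx H Xn Vn Xn1 Vn1 p) :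
    ∑ p, (m p * w p) • Vn1 p = ∑ p, (m p * w p) • Vn p := by
  have hz := sum_avgDGx H hH hforce Xn Vn Xn1 Vn1
  have key : ∑ p, (m p * w p) • Vn1 p
      = ∑ p, ((m p * w p) • Vn p - Δt • avgDGx H Xn Vn Xn1 Vn1 p) := by
    refine Finset.sum_congr rfl fun p _ => ?_
    rw [hv p, smul_sub, smul_smul]
    congr 2
    have hne : m p * w p ≠ 0 := (mul_pos (hm p) (hw p)).ne'
    field_simp
    exact mul_div_cancel_left₀ Δt hne
  rw [key, Finset.sum_sub_distrib, ← Finset.smul_sum, hz, smul_zero, sub_zero]
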